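/- In the depth-2 Jones tower setup, the bilinear form ⟨a, b⟩ := λ⁻² F(a e₂ e₁ b) on A × B is non-degenerate: if a ∈ A satisfies F(a e₂ e₁ b) = 0 for all b ∈ B, then a = 0; and if b ∈ B satisfies F(a e₂ e₁ b) = 0 for all a ∈ A, then b = 0. In particular, the map b ↦ E_{M₁}(e₂ e₁ b) is a k-linear bijection from B onto A. -/

import Mathlib

open scoped TensorProduct

/-- The depth-2 Jones tower setup: a tower `N ⊆ M ⊆ M₁ ⊆ R` (with `R` playing the
role of `M₂`) of unital `k`-algebras, with conditional expectations, Jones idempotents,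
braid-like relations and depth-2 orthogonal dual bases, as in the paper. -/
structure JonesTower (k : Type*) [Field k] (R : Type*) [Ring R] [Algebra k R] where
  N : Subalgebra k R
  M : Subalgebra k R
  M₁ : Subalgebra k R
  hNM : N ≤ M
  hMM₁ : M ≤ M₁
  lam : k
  hlam : lam ≠ 0
  E : R →ₗ[k] R
  EM : R →ₗ[k] R
  EM1 : R →ₗ[k] R
  hE_mem : ∀ m ∈ M, E m ∈ N
  hEM_mem : ∀ x ∈ M₁, EM x ∈ M
  hEM1_mem : ∀ x : R, EM1 x ∈ M₁
  hE_one : E 1 = 1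
  hEM_one : EM 1 = 1
  hEM1_one : EM1 1 = 1
  hE_bimod : ∀ n ∈ N, ∀ n' ∈ N, ∀ m ∈ M, E (n * m * n') = n * E m * n'
  hEM_bimod : ∀ m ∈ M, ∀ m' ∈ M, ∀ x ∈ M₁, EM (m * x * m') = m * EM x * m'
  hEM1_bimod : ∀ w ∈ M₁, ∀ w' ∈ M₁, ∀ x : R, EM1 (w * x * w') = w * EM1 x * w'
  n₀ : ℕ
  xb : Fin n₀ → R
  yb : Fin n₀ → R
  hxb : ∀ i, xb i ∈ M
  hyb : ∀ i, yb i ∈ M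
  hE_dual₁ : ∀ m ∈ M, ∑ i, E (m * xb i) * yb i = m
  hE_dual₂ : ∀ m ∈ M, ∑ i, xb i * E (yb i * m) = m
  hE_index : ∑ i, xb i * yb i = lam⁻¹ • (1 : R)
  hCMN : ∀ c ∈ M, (∀ n ∈ N, c * n = n * c) → ∃ μ : k, c = μ • (1 : R)
  hCM₁M : ∀ c ∈ M₁, (∀ m ∈ M, c * m = m * c) → ∃ μ : k, c = μ • (1 : R)
  hCM₂M₁ : ∀ c : R, (∀ w ∈ M₁, c * w = w * c) → ∃ μ : k, c = μ • (1 : R)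
  e₁ : R
  e₂ : R
  he₁ : e₁ ∈ M₁
  he₁N : ∀ n ∈ N, e₁ * n = n * e₁
  he₂M : ∀ m ∈ M, e₂ * m = m * e₂
  he₁me₁ : ∀ m ∈ M, e₁ * m * e₁ = E m * e₁
  he₂we₂ : ∀ w ∈ M₁, e₂ * w * e₂ = EM w * e₂
  hEMe₁ : EM e₁ = lam • (1 : R)
  hEM1e₂ : EM1 e₂ = lam • (1 : R)
  hspanM₁ : Subalgebra.toSubmodule M₁ =
    Submodule.span k {x : R | ∃ m ∈ M, ∃ m' ∈ M, x = m * e₁ * m'}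
  hspanM₂ : (⊤ : Submodule k R) =
    Submodule.span k {x : R | ∃ w ∈ M₁, ∃ w' ∈ M₁, x = w * e₂ * w'}
  hbraid₁ : e₁ * e₂ * e₁ = lam • e₁
  hbraid₂ : e₂ * e₁ * e₂ = lam • e₂
  r : ℕ
  zb : Fin r → R
  wb : Fin r → R
  hzbM₁ : ∀ i, zb i ∈ M₁
  hwbM₁ : ∀ i, wb i ∈ M₁
  hzbN : ∀ i, ∀ n ∈ N, zb i * n = n * zb i
  hwbN : ∀ i, ∀ n ∈ N, wb i * n = n * wb i
  hzw_orth : ∀ i j, EM (wb i * zb j) = if i = j then (1 : R) else 0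
  hzw_dual₁ : ∀ x ∈ M₁, ∑ i, EM (x * zb i) * wb i = x
  hzw_dual₂ : ∀ x ∈ M₁, ∑ i, zb i * EM (wb i * x) = x
  hzw_index : ∑ i, zb i * wb i = lam⁻¹ • (1 : R)
  s : ℕ
  ub : Fin s → R
  vb : Fin s → R
  hubM : ∀ i, ∀ m ∈ M, ub i * m = m * ub i
  hvbM : ∀ i, ∀ m ∈ M, vb i * m = m * vb i
  huv_orth : ∀ i j, EM1 (vb i * ub j) = if i = j then (1 : R) else 0
  huv_dual₁ : ∀ x : R, ∑ i, EM1 (x * ub i) * vb i = x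
  huv_dual₂ : ∀ x : R, ∑ i, ub i * EM1 (vb i * x) = x
  huv_index : ∑ i, ub i * vb i = lam⁻¹ • (1 : R)
  F : R →ₗ[k] k
  hF : ∀ c : R, (∀ n ∈ N, c * n = n * c) → algebraMap k R (F c) = EM (EM1 c)

variable {k : Type*} [Field k] {R : Type*} [Ring R] [Algebra k R]

/-- The second centralizer `A = C_{M₁}(N)`. -/
def JonesTower.A (T : JonesTower k R) : Subalgebra k R :=
  T.M₁ ⊓ Subalgebra.centralizer k (T.N : Set R)

/-- The second centralizer `B = C_{M₂}(M)`. -/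
def JonesTower.B (T : JonesTower k R) : Subalgebra k R :=
  Subalgebra.centralizer k (T.M : Set R)

/-- The big centralizer `C = C_{M₂}(N)`. -/
def JonesTower.C (T : JonesTower k R) : Subalgebra k R :=
  Subalgebra.centralizer k (T.N : Set R)

/-!
The map `b ↦ E_{M₁}(e₂ e₁ b)` from `B` to `A` has the explicit inverse
`a ↦ λ⁻² ∑ᵢ xᵢ e₁ e₂ a yᵢ`: averaging over a dual basis of `E` turns elements commuting with `N`
into elements commuting with `M`, and the Jones relations `e₁ e₂ e₁ = λ e₁`, `e₂ e₁ e₂ = λ e₂`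
together with `∑ᵢ xᵢ e₁ yᵢ = 1` collapse both composites to the identity. Since
`F(a e₂ e₁ b) = E_M(a E_{M₁}(e₂ e₁ b))`, the form is the pairing `(a, a') ↦ E_M(a a')` of `A`
with itself transported along this bijection, and that pairing is non-degenerate by the
dual-basis expansions `x = ∑ᵢ E_M(x zᵢ) wᵢ = ∑ᵢ zᵢ E_M(wᵢ x)`.
-/

namespace JonesTower

variable (T : JonesTower k R)

lemma A_le_M₁ : T.A ≤ T.M₁ := inf_le_left

lemma A_le_C : T.A ≤ T.C := inf_le_right

lemma B_le_C : T.B ≤ T.C := Subalgebra.centralizer_le k _ _ T.hNM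

lemma mem_C_iff {c : R} : c ∈ T.C ↔ ∀ n ∈ T.N, n * c = c * n :=
  Subalgebra.mem_centralizer_iff k

lemma mem_B_iff {b : R} : b ∈ T.B ↔ ∀ m ∈ T.M, m * b = b * m :=
  Subalgebra.mem_centralizer_iff k

lemma e₁_mem_C : T.e₁ ∈ T.C :=
  T.mem_C_iff.mpr fun n hn => (T.he₁N n hn).symm

lemma e₂_mem_B : T.e₂ ∈ T.B :=
  T.mem_B_iff.mpr fun m hm => (T.he₂M m hm).symm

lemma zb_mem_A (i : Fin T.r) : T.zb i ∈ T.A :=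
  ⟨T.hzbM₁ i, T.mem_C_iff.mpr fun n hn => (T.hzbN i n hn).symm⟩

lemma wb_mem_A (i : Fin T.r) : T.wb i ∈ T.A :=
  ⟨T.hwbM₁ i, T.mem_C_iff.mpr fun n hn => (T.hwbN i n hn).symm⟩

lemma EM1_mul_left {w : R} (hw : w ∈ T.M₁) (x : R) : T.EM1 (w * x) = w * T.EM1 x := by
  simpa using T.hEM1_bimod w hw 1 T.M₁.one_mem x

lemma EM1_mul_right {w : R} (hw : w ∈ T.M₁) (x : R) : T.EM1 (x * w) = T.EM1 x * w := by
  simpa using T.hEM1_bimod 1 T.M₁.one_mem w hw x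

lemma EM1_mem_A {c : R} (hc : c ∈ T.C) : T.EM1 c ∈ T.A := by
  refine ⟨T.hEM1_mem c, T.mem_C_iff.mpr fun n hn => ?_⟩
  have hnM₁ : n ∈ T.M₁ := T.hMM₁ (T.hNM hn)
  rw [← T.EM1_mul_left hnM₁, T.mem_C_iff.mp hc n hn, T.EM1_mul_right hnM₁]

lemma EM_eq_self_of_mem_M₁_of_commute {c : R} (hc : c ∈ T.M₁)
    (hcM : ∀ m ∈ T.M, c * m = m * c) : T.EM c = c := by
  obtain ⟨μ, rfl⟩ := T.hCM₁M c hc hcM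
  rw [map_smul, T.hEM_one]

lemma e₂_mul_EM1_e₂_mul (ξ : R) : T.e₂ * T.EM1 (T.e₂ * ξ) = T.lam • (T.e₂ * ξ) := by
  have hξ : ξ ∈ Submodule.span k {x : R | ∃ w ∈ T.M₁, ∃ w' ∈ T.M₁, x = w * T.e₂ * w'} :=
    T.hspanM₂ ▸ Submodule.mem_top
  induction hξ using Submodule.span_induction with
  | mem x hx =>
    obtain ⟨w, hw, w', hw', rfl⟩ := hx
    have hEw : T.EM w ∈ T.M := T.hEM_mem w hw
    calc T.e₂ * T.EM1 (T.e₂ * (w * T.e₂ * w'))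
        = T.e₂ * T.EM1 (T.EM w * T.e₂ * w') := by rw [← mul_assoc, ← mul_assoc, T.he₂we₂ w hw]
      _ = T.lam • (T.e₂ * T.EM w * w') := by
        rw [T.hEM1_bimod _ (T.hMM₁ hEw) w' hw', T.hEM1e₂]
        simp only [mul_smul_comm, smul_mul_assoc, mul_one, mul_assoc]
      _ = T.lam • (T.e₂ * (w * T.e₂ * w')) := by
        rw [T.he₂M _ hEw, ← T.he₂we₂ w hw]
        simp only [mul_assoc]
  | zero => simp
  | add x y _ _ hx hy => simp only [mul_add, map_add, smul_add, hx, hy]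
  | smul c x _ hx => simp only [mul_smul_comm, map_smul, hx, smul_comm c T.lam]

lemma e₂_e₁_mul_e₁_e₂ {x : R} (hx : x ∈ T.M) :
    T.e₂ * T.e₁ * x * T.e₁ * T.e₂ = T.lam • (T.E x * T.e₂) := by
  have hEx : T.E x ∈ T.M := T.hNM (T.hE_mem x hx)
  calc T.e₂ * T.e₁ * x * T.e₁ * T.e₂ = T.e₂ * (T.e₁ * x * T.e₁) * T.e₂ := by
        simp only [mul_assoc]
    _ = T.E x * (T.e₂ * T.e₁ * T.e₂) := by
        rw [T.he₁me₁ x hx, ← mul_assoc, T.he₂M _ hEx]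
        simp only [mul_assoc]
    _ = T.lam • (T.E x * T.e₂) := by rw [T.hbraid₂, mul_smul_comm]

def average : R →ₗ[k] R where
  toFun t := ∑ i, T.xb i * t * T.yb i
  map_add' t t' := by simp only [mul_add, add_mul, Finset.sum_add_distrib]
  map_smul' c t := by simp only [mul_smul_comm, smul_mul_assoc, Finset.smul_sum, RingHom.id_apply]

lemma average_apply (t : R) : T.average t = ∑ i, T.xb i * t * T.yb i := rfl

/-- The element `t` can be pushed through `E(yᵢ m xⱼ) ∈ N`, after which the two
dual-basis expansions of `m` give `(∑ᵢ xᵢ t yᵢ) m = m (∑ᵢ xᵢ t yᵢ)`. -/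
lemma average_mem_B {t : R} (ht : t ∈ T.C) : T.average t ∈ T.B := by
  refine T.mem_B_iff.mpr fun m hm => ?_
  have hEN : ∀ i j, T.E (T.yb i * m * T.xb j) ∈ T.N := fun i j =>
    T.hE_mem _ (T.M.mul_mem (T.M.mul_mem (T.hyb i) hm) (T.hxb j))
  have hcomm : ∀ i j, t * T.E (T.yb i * m * T.xb j) = T.E (T.yb i * m * T.xb j) * t :=
    fun i j => (T.mem_C_iff.mp ht _ (hEN i j)).symm
  symm
  calc T.average t * m
      = ∑ i, ∑ j, T.xb i * (t * T.E (T.yb i * m * T.xb j)) * T.yb j := by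
        simp only [average_apply, Finset.sum_mul]
        refine Finset.sum_congr rfl fun i _ => ?_
        conv_lhs => rw [mul_assoc, ← T.hE_dual₁ _ (T.M.mul_mem (T.hyb i) hm), Finset.mul_sum]
        simp only [mul_assoc]
    _ = ∑ j, (∑ i, T.xb i * T.E (T.yb i * (m * T.xb j))) * t * T.yb j := by
        simp only [hcomm]
        rw [Finset.sum_comm]
        simp only [Finset.sum_mul, mul_assoc]
    _ = m * T.average t := by
        simp only [T.hE_dual₂ _ (T.M.mul_mem hm (T.hxb _)), average_apply, Finset.mul_sum,
          mul_assoc]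

lemma average_mul_of_mem_B (t : R) {b : R} (hb : b ∈ T.B) :
    T.average (t * b) = T.average t * b := by
  simp only [average_apply, Finset.sum_mul, mul_assoc, T.mem_B_iff.mp hb _ (T.hyb _)]

lemma sum_E_xb_mul_yb : ∑ i, T.E (T.xb i) * T.yb i = 1 := by
  simpa using T.hE_dual₁ 1 T.M.one_mem

/-- `∑ᵢ xᵢ e₁ yᵢ` lies in `C_{M₁}(M) = k`, so it equals its image `λ ∑ᵢ xᵢ yᵢ = 1` under `E_M`. -/
lemma average_e₁ : T.average T.e₁ = 1 := by
  have hM₁ : T.average T.e₁ ∈ T.M₁ := by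
    rw [average_apply]
    exact Subalgebra.sum_mem _ fun i _ =>
      T.M₁.mul_mem (T.M₁.mul_mem (T.hMM₁ (T.hxb i)) T.he₁) (T.hMM₁ (T.hyb i))
  rw [← T.EM_eq_self_of_mem_M₁_of_commute hM₁
    fun m hm => (T.mem_B_iff.mp (T.average_mem_B T.e₁_mem_C) m hm).symm]
  simp only [average_apply, map_sum, T.hEM_bimod _ (T.hxb _) _ (T.hyb _) _ T.he₁, T.hEMe₁,
    mul_smul_comm, smul_mul_assoc, mul_one, ← Finset.smul_sum, T.hE_index, smul_smul,
    mul_inv_cancel₀ T.hlam, one_smul]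

def toA (b : R) : R := T.EM1 (T.e₂ * T.e₁ * b)

noncomputable def toB (a : R) : R := (T.lam ^ 2)⁻¹ • T.average (T.e₁ * T.e₂ * a)

lemma toA_mem_A {b : R} (hb : b ∈ T.B) : T.toA b ∈ T.A :=
  T.EM1_mem_A (mul_mem (mul_mem (T.B_le_C T.e₂_mem_B) T.e₁_mem_C) (T.B_le_C hb))

lemma algebraMap_F_eq_EM {a b : R} (ha : a ∈ T.A) (hb : b ∈ T.B) :
    algebraMap k R (T.F (a * T.e₂ * T.e₁ * b)) = T.EM (a * T.toA b) := by
  have hc : a * T.e₂ * T.e₁ * b ∈ T.C :=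
    mul_mem (mul_mem (mul_mem (T.A_le_C ha) (T.B_le_C T.e₂_mem_B)) T.e₁_mem_C) (T.B_le_C hb)
  rw [T.hF _ fun n hn => (T.mem_C_iff.mp hc n hn).symm, toA, ← T.EM1_mul_left (T.A_le_M₁ ha)]
  simp only [mul_assoc]

lemma toB_mem_B {a : R} (ha : a ∈ T.A) : T.toB a ∈ T.B :=
  T.B.smul_mem (T.average_mem_B (mul_mem (mul_mem T.e₁_mem_C (T.B_le_C T.e₂_mem_B))
    (T.A_le_C ha))) _

lemma toA_toB {a : R} (ha : a ∈ T.A) : T.toA (T.toB a) = a := by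
  have haM₁ : a ∈ T.M₁ := T.A_le_M₁ ha
  have hterm : ∀ i, T.EM1 (T.e₂ * T.e₁ * (T.xb i * (T.e₁ * T.e₂ * a) * T.yb i)) =
      T.lam ^ 2 • (a * (T.E (T.xb i) * T.yb i)) := fun i => by
    have hExi : T.E (T.xb i) ∈ T.N := T.hE_mem _ (T.hxb i)
    calc T.EM1 (T.e₂ * T.e₁ * (T.xb i * (T.e₁ * T.e₂ * a) * T.yb i))
        = T.EM1 (T.lam • (T.E (T.xb i) * T.e₂ * (a * T.yb i))) := by
          rw [show T.e₂ * T.e₁ * (T.xb i * (T.e₁ * T.e₂ * a) * T.yb i) =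
              T.e₂ * T.e₁ * T.xb i * T.e₁ * T.e₂ * (a * T.yb i) by simp only [mul_assoc],
            T.e₂_e₁_mul_e₁_e₂ (T.hxb i), smul_mul_assoc]
      _ = T.lam ^ 2 • (T.E (T.xb i) * a * T.yb i) := by
          rw [map_smul, T.hEM1_bimod _ (T.hMM₁ (T.hNM hExi)) _
            (T.M₁.mul_mem haM₁ (T.hMM₁ (T.hyb i))), T.hEM1e₂]
          simp only [mul_smul_comm, smul_mul_assoc, mul_one, smul_smul, mul_assoc, sq]
      _ = T.lam ^ 2 • (a * (T.E (T.xb i) * T.yb i)) := by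
          rw [T.mem_C_iff.mp (T.A_le_C ha) _ hExi, mul_assoc]
  rw [toA, toB, mul_smul_comm, map_smul, average_apply, Finset.mul_sum, map_sum,
    Finset.sum_congr rfl fun i _ => hterm i, ← Finset.smul_sum, ← Finset.mul_sum,
    T.sum_E_xb_mul_yb, mul_one, inv_smul_smul₀ (pow_ne_zero 2 T.hlam)]

lemma toB_toA {b : R} (hb : b ∈ T.B) : T.toB (T.toA b) = b := by
  have hcollapse : T.e₁ * T.e₂ * T.toA b = T.lam ^ 2 • (T.e₁ * b) := by
    rw [toA, mul_assoc T.e₂, mul_assoc, T.e₂_mul_EM1_e₂_mul, mul_smul_comm, ← mul_assoc,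
      ← mul_assoc, T.hbraid₁, smul_mul_assoc, smul_smul, sq]
  rw [toB, hcollapse, map_smul, T.average_mul_of_mem_B _ hb, T.average_e₁, one_mul,
    inv_smul_smul₀ (pow_ne_zero 2 T.hlam)]

lemma invOn_toB_toA : Set.InvOn T.toB T.toA T.B T.A :=
  ⟨fun _ hb => T.toB_toA hb, fun _ ha => T.toA_toB ha⟩

lemma eq_zero_of_EM_mul_zb_eq_zero {x : R} (hx : x ∈ T.M₁) (h : ∀ i, T.EM (x * T.zb i) = 0) :
    x = 0 := by
  simpa [h] using (T.hzw_dual₁ x hx).symm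

lemma eq_zero_of_EM_wb_mul_eq_zero {x : R} (hx : x ∈ T.M₁) (h : ∀ i, T.EM (T.wb i * x) = 0) :
    x = 0 := by
  simpa [h] using (T.hzw_dual₂ x hx).symm

end JonesTower

theorem duality_form_nondegenerate_general (T : JonesTower k R) :
    (∀ a ∈ T.A, (∀ b ∈ T.B, T.F (a * T.e₂ * T.e₁ * b) = 0) → a = 0) ∧
    (∀ b ∈ T.B, (∀ a ∈ T.A, T.F (a * T.e₂ * T.e₁ * b) = 0) → b = 0) ∧
    Set.BijOn (fun b : R => T.EM1 (T.e₂ * T.e₁ * b)) (T.B : Set R) (T.A : Set R) := by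
  refine ⟨fun a ha h => ?_, fun b hb h => ?_, ?_⟩
  · refine T.eq_zero_of_EM_mul_zb_eq_zero (T.A_le_M₁ ha) fun i => ?_
    have hb : T.toB (T.zb i) ∈ T.B := T.toB_mem_B (T.zb_mem_A i)
    rw [← T.toA_toB (T.zb_mem_A i), ← T.algebraMap_F_eq_EM ha hb, h _ hb, map_zero]
  · have htoA : T.toA b = 0 :=
      T.eq_zero_of_EM_wb_mul_eq_zero (T.A_le_M₁ (T.toA_mem_A hb)) fun i => by
        rw [← T.algebraMap_F_eq_EM (T.wb_mem_A i) hb, h _ (T.wb_mem_A i), map_zero]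
    rw [← T.toB_toA hb, htoA, JonesTower.toB, mul_zero, map_zero, smul_zero]
  · exact T.invOn_toB_toA.bijOn (fun _ => T.toA_mem_A) fun _ => T.toB_mem_B

/-- The bilinear form `⟨a, b⟩ = λ⁻² F(a e₂ e₁ b)` on `A × B` is non-degenerate,
and `b ↦ E_{M₁}(e₂ e₁ b)` is a (`k`-linear) bijection from `B` onto `A`. -/
theorem duality_form_nondegenerate (T : JonesTower k R) [Nontrivial R] :
    (∀ a ∈ T.A, (∀ b ∈ T.B, T.F (a * T.e₂ * T.e₁ * b) = 0) → a = 0) ∧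
    (∀ b ∈ T.B, (∀ a ∈ T.A, T.F (a * T.e₂ * T.e₁ * b) = 0) → b = 0) ∧
    Set.BijOn (fun b : R => T.EM1 (T.e₂ * T.e₁ * b)) (T.B : Set R) (T.A : Set R) :=
  duality_form_nondegenerate_general T
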